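/- For every real number t > 0 and every natural number p: ∑_{k=0}^{p} C(p,k) (e^t - 1)^{p-k} ∑_{i=1}^{k} (1 - (1 - e^t)^i)/i = H_p * e^{p t}. -/

import Mathlib

open Finset

lemma alt_sum (p : ℕ) : ∑ k ∈ Finset.range (p+1), (-1:ℝ)^k * ((p+1).choose (k+1) : ℝ) = 1 := by
  have h : ∑ i ∈ Finset.range (p+2), (-1:ℝ)^i * ((p+1).choose i : ℝ) = 0 := by
    have h0 := Int.alternating_sum_range_choose (n := p+1)
    rw [if_neg (Nat.succ_ne_zero p)] at h0
    have h1 := congrArg (fun z : ℤ => (z : ℝ)) h0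
    push_cast at h1
    simpa using h1
  rw [Finset.sum_range_succ' (fun i => (-1:ℝ)^i * ((p+1).choose i : ℝ)) (p+1)] at h
  have h2 : ∑ i ∈ Finset.range (p+1), (-1:ℝ)^(i+1) * ((p+1).choose (i+1) : ℝ)
      = -∑ i ∈ Finset.range (p+1), (-1:ℝ)^i * ((p+1).choose (i+1) : ℝ) := by
    rw [← Finset.sum_neg_distrib]
    apply Finset.sum_congr rfl
    intro i _
    ring
  simp only [h2, pow_zero, Nat.choose_zero_right, Nat.cast_one, one_mul] at h
  linarith

lemma key' (u : ℝ) (p : ℕ) :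
    ∑ k ∈ Finset.range (p+1), ((p+1).choose (k+1) : ℝ) * (u-1)^(p-k) * (1 - (1-u)^(k+1))
      = u^(p+1) := by
  have split : ∀ k ∈ Finset.range (p+1),
      ((p+1).choose (k+1) : ℝ) * (u-1)^(p-k) * (1 - (1-u)^(k+1))
        = ((p+1).choose (k+1) : ℝ) * (u-1)^(p-k)
          + (-1:ℝ)^k * ((p+1).choose (k+1) : ℝ) * (u-1)^(p+1) := by
    intro k hk
    rw [Finset.mem_range] at hk
    have hk' : k ≤ p := Nat.lt_succ_iff.mp hk
    have h1 : (1-u)^(k+1) = (-1:ℝ)^(k+1) * (u-1)^(k+1) := by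
      rw [← neg_sub u 1, neg_pow]
    have h2 : (u-1)^(p-k) * (u-1)^(k+1) = (u-1)^(p+1) := by
      rw [← pow_add]
      congr 1
      omega
    rw [h1, ← h2]
    ring
  rw [Finset.sum_congr rfl split, Finset.sum_add_distrib]
  have hS2 : ∑ k ∈ Finset.range (p+1), (-1:ℝ)^k * ((p+1).choose (k+1) : ℝ) * (u-1)^(p+1)
      = (u-1)^(p+1) := by
    rw [← Finset.sum_mul, alt_sum, one_mul]
  have hS1 : ∑ k ∈ Finset.range (p+1), ((p+1).choose (k+1) : ℝ) * (u-1)^(p-k)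
      = u^(p+1) - (u-1)^(p+1) := by
    have hb : ∑ j ∈ Finset.range (p+2), (1:ℝ)^j * (u-1)^(p+1-j) * ((p+1).choose j : ℝ)
        = u^(p+1) := by
      rw [← add_pow]
      norm_num
    rw [Finset.sum_range_succ' (fun j => (1:ℝ)^j * (u-1)^(p+1-j) * ((p+1).choose j : ℝ)) (p+1)] at hb
    simp only [one_pow, one_mul, pow_zero, Nat.choose_zero_right, Nat.cast_one, mul_one,
      Nat.sub_zero] at hb
    have : ∑ i ∈ Finset.range (p+1), (u-1)^(p+1-(i+1)) * ((p+1).choose (i+1) : ℝ)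
        = ∑ k ∈ Finset.range (p+1), ((p+1).choose (k+1) : ℝ) * (u-1)^(p-k) := by
      apply Finset.sum_congr rfl
      intro i _
      rw [mul_comm]
      congr 2
      omega
    rw [this] at hb
    linarith
  rw [hS1, hS2]
  ring

lemma key (u : ℝ) (p : ℕ) :
    ∑ k ∈ Finset.range (p+1), (p.choose k : ℝ) * (u-1)^(p-k) * ((1 - (1-u)^(k+1))/((k:ℝ)+1))
      = u^(p+1)/((p:ℝ)+1) := by
  have step : ∀ k ∈ Finset.range (p+1),
      (p.choose k : ℝ) * (u-1)^(p-k) * ((1 - (1-u)^(k+1))/((k:ℝ)+1))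
        = (((p+1).choose (k+1) : ℝ) * (u-1)^(p-k) * (1 - (1-u)^(k+1))) / ((p:ℝ)+1) := by
    intro k _
    have hc : ((p:ℝ)+1) * (p.choose k : ℝ) = ((p+1).choose (k+1) : ℝ) * ((k:ℝ)+1) := by
      have := Nat.add_one_mul_choose_eq p k
      have h1 := congrArg (fun n : ℕ => (n : ℝ)) this
      push_cast at h1
      linarith
    have hk : ((k:ℝ)+1) ≠ 0 := by positivity
    have hp : ((p:ℝ)+1) ≠ 0 := by positivity
    field_simp
    linear_combination (u-1)^(p-k) * (1 - (1-u)^(k+1)) * hc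
  rw [Finset.sum_congr rfl step, ← Finset.sum_div, key']

lemma main_id (u : ℝ) (p : ℕ) :
    ∑ k ∈ Finset.range (p+1), (p.choose k : ℝ) * (u-1)^(p-k) *
        (∑ i ∈ Finset.Icc 1 k, (1 - (1-u)^i)/(i:ℝ))
      = (∑ j ∈ Finset.Icc 1 p, (1/(j:ℝ))) * u^p := by
  induction p with
  | zero => simp
  | succ p ih =>
    set f : ℕ → ℝ := fun k => ∑ i ∈ Finset.Icc 1 k, (1 - (1-u)^i)/(i:ℝ) with hf
    have hf0 : f 0 = 0 := by simp [hf]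
    rw [Finset.sum_range_succ' (fun k => ((p+1).choose k : ℝ) * (u-1)^(p+1-k) * f k) p.succ]
    have hlast : ((p+1).choose 0 : ℝ) * (u-1)^(p+1-0) * f 0 = 0 := by
      rw [hf0]; ring
    rw [hlast, add_zero]
    have hterm : ∀ k ∈ Finset.range (p+1),
        ((p+1).choose (k+1) : ℝ) * (u-1)^(p+1-(k+1)) * f (k+1)
          = (p.choose k : ℝ) * (u-1)^(p-k) * f (k+1)
            + (p.choose (k+1) : ℝ) * (u-1)^(p-k) * f (k+1) := by
      intro k hk
      have hcc : (p+1).choose (k+1) = p.choose k + p.choose (k+1) := Nat.choose_succ_succ p k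
      have he : p+1-(k+1) = p - k := by omega
      rw [hcc, he]
      push_cast
      ring
    rw [Finset.sum_congr rfl hterm, Finset.sum_add_distrib]
    have hA : ∑ k ∈ Finset.range (p+1), (p.choose k : ℝ) * (u-1)^(p-k) * f (k+1)
        = (∑ j ∈ Finset.Icc 1 p, (1/(j:ℝ))) * u^p + u^(p+1)/((p:ℝ)+1) := by
      have hsplit : ∀ k ∈ Finset.range (p+1),
          (p.choose k : ℝ) * (u-1)^(p-k) * f (k+1)
            = (p.choose k : ℝ) * (u-1)^(p-k) * f k
              + (p.choose k : ℝ) * (u-1)^(p-k) * ((1 - (1-u)^(k+1))/((k:ℝ)+1)) := by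
        intro k _
        have hfk : f (k+1) = f k + (1 - (1-u)^(k+1))/((k:ℝ)+1) := by
          simp only [hf]
          rw [Finset.sum_Icc_succ_top (Nat.one_le_iff_ne_zero.mpr (Nat.succ_ne_zero k))]
          push_cast
          ring
        rw [hfk]; ring
      rw [Finset.sum_congr rfl hsplit, Finset.sum_add_distrib, ih, key]
    have hB : ∑ k ∈ Finset.range (p+1), (p.choose (k+1) : ℝ) * (u-1)^(p-k) * f (k+1)
        = (u-1) * ((∑ j ∈ Finset.Icc 1 p, (1/(j:ℝ))) * u^p) := by
      have h1 : ∑ k ∈ Finset.range (p+2), (p.choose k : ℝ) * (u-1)^(p+1-k) * f k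
          = ∑ k ∈ Finset.range (p+1), (p.choose (k+1) : ℝ) * (u-1)^(p-k) * f (k+1) := by
        rw [Finset.sum_range_succ' (fun k => (p.choose k : ℝ) * (u-1)^(p+1-k) * f k) (p+1)]
        have h0 : ((p.choose 0 : ℝ)) * (u-1)^(p+1-0) * f 0 = 0 := by rw [hf0]; ring
        rw [h0, add_zero]
        apply Finset.sum_congr rfl
        intro k _
        have he : p+1-(k+1) = p - k := by omega
        simp only [he]
      have h2 : (u-1) * ∑ k ∈ Finset.range (p+1), (p.choose k : ℝ) * (u-1)^(p-k) * f k
          = ∑ k ∈ Finset.range (p+2), (p.choose k : ℝ) * (u-1)^(p+1-k) * f k := by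
        rw [Finset.mul_sum]
        conv_rhs => rw [Finset.sum_range_succ]
        have hlast2 : (p.choose (p+1) : ℝ) * (u-1)^(p+1-(p+1)) * f (p+1) = 0 := by
          rw [Nat.choose_eq_zero_of_lt (Nat.lt_succ_self p)]
          push_cast
          ring
        rw [hlast2, add_zero]
        apply Finset.sum_congr rfl
        intro k hk
        rw [Finset.mem_range] at hk
        have he : p+1-k = (p-k)+1 := by omega
        rw [he, pow_succ]
        ring
      rw [← h1, ← h2, ih]
    rw [hA, hB]
    rw [Finset.sum_Icc_succ_top (Nat.one_le_iff_ne_zero.mpr (Nat.succ_ne_zero p))]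
    push_cast
    ring

theorem stmt_9 (t : ℝ) (ht : 0 < t) (p : ℕ) :
    ∑ k ∈ Finset.range (p + 1), (p.choose k : ℝ) * (Real.exp t - 1) ^ (p - k) *
        ∑ i ∈ Finset.Icc 1 k, (1 - (1 - Real.exp t) ^ i) / (i : ℝ) =
      (∑ j ∈ Finset.Icc 1 p, (1 / (j : ℝ))) * Real.exp ((p : ℝ) * t) := by
  rw [Real.exp_nat_mul]
  exact main_id (Real.exp t) p
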